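/- arXiv:1710.09146 — 3 statements merged into one kernel-verified Lean document; each statement's English description precedes it below -/
import Mathlib

section
/- For the one-sample normal test with unknown variance using cake priors, letting h → ∞ the Bayesian test statistic equals λ_Bayes = n ln(σ̂₀²) − n ln(σ̂₁²) − ln n, where σ̂₀² = n⁻¹‖x − μ₀𝟙‖² and σ̂₁² = n⁻¹‖x − x̄𝟙‖². -/
/-!
Both marginal likelihoods are inverse-gamma integrals: the substitution `t ↦ 1/t` turns
`∫ t^{-(k+1)} e^{-a/t} dt` into Euler's integral, with value `Γ(k) / a^k`, here with `k = n/2` and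
`a = n σ̂²/2`. In the Bayes factor the constants `(2π)^{-n/2}` and `Γ(n/2)` cancel, leaving
`√n · (σ̂₁² / σ̂₀²)^{n/2}`.
-/

open Real MeasureTheory Set

theorem integral_rpow_neg_mul_exp_neg_div_Ioi {s a : ℝ} (hs : 0 < s) (ha : 0 < a) :
    ∫ t in Ioi 0, t ^ (-(s + 1)) * exp (-(a / t)) = Gamma s / a ^ s := by
  have hsubst : ∀ t ∈ Ioi (0 : ℝ), t ^ (-(s + 1)) * exp (-(a / t)) =
      (|(-1 : ℝ)| * t ^ ((-1 : ℝ) - 1)) • ((t ^ (-1 : ℝ)) ^ (s - 1) * exp (-(a * t ^ (-1 : ℝ)))) := by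
    intro t (ht : 0 < t)
    rw [smul_eq_mul, ← mul_assoc, ← rpow_mul ht.le, abs_neg, abs_one, one_mul, ← rpow_add ht,
      rpow_neg_one, ← div_eq_mul_inv]
    ring_nf
  calc ∫ t in Ioi 0, t ^ (-(s + 1)) * exp (-(a / t))
      = ∫ y in Ioi 0, y ^ (s - 1) * exp (-(a * y)) := by
        rw [setIntegral_congr_fun measurableSet_Ioi hsubst,
          integral_comp_rpow_Ioi (fun y => y ^ (s - 1) * exp (-(a * y))) (by norm_num)]
    _ = Gamma s / a ^ s := by
        rw [integral_rpow_mul_exp_neg_mul_Ioi hs ha, one_div, inv_rpow ha.le, inv_mul_eq_div]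

theorem integral_exp_neg_mul_log_sub_div_Ioi {s a : ℝ} (hs : 0 < s) (ha : 0 < a) :
    ∫ t in Ioi 0, exp (-(s + 1) * log t - a / t) = Gamma s / a ^ s := by
  rw [← integral_rpow_neg_mul_exp_neg_div_Ioi hs ha]
  refine setIntegral_congr_fun measurableSet_Ioi fun t (ht : 0 < t) => ?_
  rw [sub_eq_add_neg, exp_add, rpow_def_of_pos ht, mul_comm (log t)]

theorem integral_exp_neg_mul_log_sub_div_sub_Ioi {s a : ℝ} (c : ℝ) (hs : 0 < s) (ha : 0 < a) :
    ∫ t in Ioi 0, exp (-(s + 1) * log t - a / t - c) = exp (-c) * (Gamma s / a ^ s) := by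
  simp_rw [sub_eq_add_neg _ c, exp_add, integral_mul_const,
    integral_exp_neg_mul_log_sub_div_Ioi hs ha, mul_comm]

theorem one_sample_cake_bayes_statistic_general (n : ℕ) (hn : 1 ≤ n)
    (s0 s1 : ℝ)
    (hs0pos : 0 < s0) (hs1pos : 0 < s1) :
    -2 * Real.log
      ((∫ t in Set.Ioi (0 : ℝ),
          (2 * Real.pi) ^ (-(n : ℝ) / 2) *
            Real.exp (-((n : ℝ) / 2 + 1) * Real.log t - n * s0 / (2 * t))) /
       (∫ t in Set.Ioi (0 : ℝ),
          (2 * Real.pi) ^ (-(n : ℝ) / 2) *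
            Real.exp (-((n : ℝ) / 2 + 1) * Real.log t - n * s1 / (2 * t)
              - (1 / 2) * Real.log n)))
      = (n : ℝ) * Real.log s0 - (n : ℝ) * Real.log s1 - Real.log n := by
  have hn_pos : 0 < (n : ℝ) := by exact_mod_cast hn
  have hk : 0 < (n : ℝ) / 2 := by positivity
  simp_rw [div_mul_eq_div_div _ (2 : ℝ), integral_const_mul,
    integral_exp_neg_mul_log_sub_div_Ioi hk (by positivity : 0 < n * s0 / 2),
    integral_exp_neg_mul_log_sub_div_sub_Ioi _ hk (by positivity : 0 < n * s1 / 2)]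
  have hbayes_factor :
      (2 * π) ^ (-(n : ℝ) / 2) * (Gamma (n / 2) / (n * s0 / 2) ^ ((n : ℝ) / 2)) /
        ((2 * π) ^ (-(n : ℝ) / 2) *
          (exp (-(1 / 2 * log n)) * (Gamma (n / 2) / (n * s1 / 2) ^ ((n : ℝ) / 2))))
      = exp (1 / 2 * log n) * (s1 / s0) ^ ((n : ℝ) / 2) := by
    have hΓ := Gamma_pos_of_pos hk
    rw [div_rpow hs1pos.le hs0pos.le, exp_neg, div_rpow (by positivity) zero_le_two,
      div_rpow (by positivity) zero_le_two, mul_rpow hn_pos.le hs0pos.le,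
      mul_rpow hn_pos.le hs1pos.le]
    field_simp
  rw [hbayes_factor, log_mul (exp_pos _).ne' (by positivity), log_exp,
    log_rpow (div_pos hs1pos hs0pos), log_div hs1pos.ne' hs0pos.ne']
  ring

/-- One-sample normal test with unknown variance and cake priors: in the limit
h → ∞, λ_Bayes = −2 ln(p(x|H₀)/p(x|H₁)) = n ln σ̂₀² − n ln σ̂₁² − ln n. -/
theorem one_sample_cake_bayes_statistic (n : ℕ) (hn : 1 ≤ n) (μ₀ : ℝ)
    (x : Fin n → ℝ)
    (s0 s1 : ℝ)
    (hs0 : s0 = (∑ i, (x i - μ₀) ^ 2) / n)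
    (hs1 : s1 = (∑ i, (x i - (∑ j, x j) / n) ^ 2) / n)
    (hs0pos : 0 < s0) (hs1pos : 0 < s1) :
    -2 * Real.log
      ((∫ t in Set.Ioi (0 : ℝ),
          (2 * Real.pi) ^ (-(n : ℝ) / 2) *
            Real.exp (-((n : ℝ) / 2 + 1) * Real.log t - n * s0 / (2 * t))) /
       (∫ t in Set.Ioi (0 : ℝ),
          (2 * Real.pi) ^ (-(n : ℝ) / 2) *
            Real.exp (-((n : ℝ) / 2 + 1) * Real.log t - n * s1 / (2 * t)
              - (1 / 2) * Real.log n)))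
      = (n : ℝ) * Real.log s0 - (n : ℝ) * Real.log s1 - Real.log n :=
  one_sample_cake_bayes_statistic_general n hn s0 s1 hs0pos hs1pos
end

section
/- For the two-sample normal test with unequal variances and cake priors, the exact Bayesian test statistic λ_Bayes = λ_LRT − 3 ln n − 2ξ(n/2) + 2ξ(n₀/2) + 2ξ(n₁/2) + ln(n₀n₁/2) satisfies λ_Bayes = λ_LRT − 2 ln n + O(1/n₀ + 1/n₁), i.e., |λ_Bayes − λ_LRT + 2 ln n| ≤ C(1/n₀ + 1/n₁) for some constant C when n₀, n₁ ≥ 2 and n = n₀ + n₁. -/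
/-!
Write `R(x) = log Γ(x) - (x - 1/2) log x + x - log(2π)/2` for the Stirling remainder, so that
`ξ(x) = R(x) - (log x)/2`. The logarithms in the penalty then cancel exactly, leaving
`2 R(n₀/2) + 2 R(n₁/2) - 2 R(n/2)`, and everything follows from the classical bound
`0 ≤ R(x) ≤ 1/(12x)` at half-integers.

That bound comes from the series `R(x) - R(x+1) = ∑_{k ≥ 1} y^(2k)/(2k+1)` with `y = 1/(2x+1)`,
whose terms are nonnegative and sum to at most `(1/x - 1/(x+1))/12`; telescoping along `x + ℕ`
gives the bound once `R(x + m) → 0`. Along the integers this is Stirling's formula for `n!`, and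
along the half-integers it follows from Legendre's duplication formula, which expresses
`R(n + 1/2)` through `R(2n) - R(n)`.
-/

open Real

noncomputable def xiFn (x : ℝ) : ℝ :=
  Real.log (Real.Gamma x) + x - x * Real.log x - (1 / 2) * Real.log (2 * Real.pi)

open Filter Topology

noncomputable def stirlingRemainder (x : ℝ) : ℝ :=
  log (Gamma x) - (x - 1 / 2) * log x + x - log (2 * π) / 2

theorem stirlingRemainder_sub_succ {x : ℝ} (hx : 0 < x) :
    stirlingRemainder x - stirlingRemainder (x + 1) = (x + 1 / 2) * log (1 + x⁻¹) - 1 := by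
  have h : 1 + x⁻¹ = (x + 1) / x := by field_simp
  rw [stirlingRemainder, stirlingRemainder, Gamma_add_one hx.ne',
    log_mul hx.ne' (Gamma_pos_of_pos hx).ne', h, log_div (by positivity) hx.ne']
  ring

theorem hasSum_stirlingRemainder_sub_succ {x : ℝ} (hx : 0 < x) :
    HasSum (fun k : ℕ => 1 / (2 * (k + 1 : ℝ) + 1) * ((1 / (2 * x + 1)) ^ 2) ^ (k + 1))
      (stirlingRemainder x - stirlingRemainder (x + 1)) := by
  let f (k : ℕ) : ℝ := 1 / (2 * k + 1) * ((1 / (2 * x + 1)) ^ 2) ^ k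
  have hf : HasSum f ((x + 1 / 2) * log (1 + x⁻¹)) := by
    have hterm (k : ℕ) :
        f k = (x + 1 / 2) * (2 * (1 / (2 * k + 1)) * (1 / (2 * x + 1)) ^ (2 * k + 1)) := by
      simp only [f, pow_succ]
      field
    exact funext hterm ▸ (hasSum_log_one_add_inv hx).mul_left (x + 1 / 2)
  rw [stirlingRemainder_sub_succ hx]
  simpa [f] using (hasSum_nat_add_iff' 1).mpr hf

theorem stirlingRemainder_sub_succ_nonneg {x : ℝ} (hx : 0 < x) :
    0 ≤ stirlingRemainder x - stirlingRemainder (x + 1) :=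
  (hasSum_stirlingRemainder_sub_succ hx).nonneg fun k => by positivity

theorem stirlingRemainder_sub_succ_le {x : ℝ} (hx : 0 < x) :
    stirlingRemainder x - stirlingRemainder (x + 1) ≤ (x⁻¹ - (x + 1)⁻¹) / 12 := by
  set r : ℝ := (1 / (2 * x + 1)) ^ 2 with hr
  have hr1 : r < 1 := by
    rw [hr, div_pow, one_pow, div_lt_one (by positivity)]
    nlinarith
  have hgeom : HasSum (fun k : ℕ => r ^ (k + 1) / 3) ((x⁻¹ - (x + 1)⁻¹) / 12) := by
    have h1r : 1 - r = 4 * x * (x + 1) / (2 * x + 1) ^ 2 := by rw [hr]; field_simp; ring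
    have h := ((hasSum_geometric_of_lt_one (by positivity) hr1).mul_left r).div_const 3
    rw [show r * (1 - r)⁻¹ / 3 = (x⁻¹ - (x + 1)⁻¹) / 12 by
      rw [h1r, hr]; field_simp; ring] at h
    simpa only [pow_succ'] using h
  refine hasSum_le (fun k => ?_) (hasSum_stirlingRemainder_sub_succ hx) hgeom
  rw [div_eq_inv_mul _ (3 : ℝ), one_div (2 * (k + 1 : ℝ) + 1)]
  gcongr
  linarith [k.cast_nonneg (α := ℝ)]

theorem stirlingRemainder_sub_add_natCast_mem_Icc {x : ℝ} (hx : 0 < x) (m : ℕ) :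
    stirlingRemainder x - stirlingRemainder (x + m) ∈
      Set.Icc 0 ((x⁻¹ - (x + m)⁻¹) / 12) := by
  induction m with
  | zero => simp
  | succ m ih =>
    have hxm : 0 < x + m := by positivity
    have h0 := stirlingRemainder_sub_succ_nonneg hxm
    have h1 := stirlingRemainder_sub_succ_le hxm
    push_cast
    rw [← add_assoc]
    constructor <;> linarith [ih.1, ih.2]

theorem stirlingRemainder_mem_Icc_of_tendsto {x : ℝ} (hx : 0 < x)
    (h : Tendsto (fun m : ℕ => stirlingRemainder (x + m)) atTop (𝓝 0)) :
    stirlingRemainder x ∈ Set.Icc 0 (x⁻¹ / 12) := by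
  have hlim : Tendsto (fun m : ℕ => stirlingRemainder x - stirlingRemainder (x + m)) atTop
      (𝓝 (stirlingRemainder x)) := by
    simpa using h.const_sub (stirlingRemainder x)
  refine ⟨ge_of_tendsto' hlim fun m => (stirlingRemainder_sub_add_natCast_mem_Icc hx m).1,
    le_of_tendsto' hlim fun m => (stirlingRemainder_sub_add_natCast_mem_Icc hx m).2.trans ?_⟩
  have : 0 ≤ (x + m)⁻¹ := by positivity
  linarith

theorem stirlingRemainder_natCast {n : ℕ} (hn : n ≠ 0) :
    stirlingRemainder n = log (Stirling.stirlingSeq n) - log √π := by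
  have hn' : (0 : ℝ) < n := by positivity
  have hΓ : Gamma (n + 1) = n * Gamma n := Gamma_add_one hn'.ne'
  rw [Gamma_nat_eq_factorial] at hΓ
  have hlogΓ : log (Gamma n) = log n.factorial - log n := by
    rw [hΓ, log_mul hn'.ne' (Gamma_pos_of_pos hn').ne']; ring
  rw [Stirling.log_stirlingSeq_formula, stirlingRemainder, hlogΓ, log_sqrt pi_pos.le,
    log_mul two_ne_zero pi_ne_zero, log_mul two_ne_zero hn'.ne', log_div hn'.ne' (exp_ne_zero 1),
    log_exp]
  ring

theorem tendsto_stirlingRemainder_natCast :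
    Tendsto (fun n : ℕ => stirlingRemainder n) atTop (𝓝 0) := by
  have h : Tendsto (fun n : ℕ => log (Stirling.stirlingSeq n) - log √π) atTop (𝓝 0) := by
    simpa using ((continuousAt_log (by positivity)).tendsto.comp
      Stirling.tendsto_stirlingSeq_sqrt_pi).sub_const (log √π)
  refine h.congr' ?_
  filter_upwards [eventually_ne_atTop 0] with n hn
  exact (stirlingRemainder_natCast hn).symm

theorem stirlingRemainder_add_half {x : ℝ} (hx : 0 < x) :
    stirlingRemainder (x + 1 / 2) =
      stirlingRemainder (2 * x) - stirlingRemainder x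
        + (1 - 2 * x * log (1 + 1 / (2 * x))) / 2 := by
  have hdup := Gamma_mul_Gamma_add_half x
  have hx' : 0 < x + 1 / 2 := by positivity
  have hlog : log (Gamma x) + log (Gamma (x + 1 / 2)) =
      log (Gamma (2 * x)) + (1 - 2 * x) * log 2 + log π / 2 := by
    have := congrArg log hdup
    rwa [log_mul (Gamma_pos_of_pos hx).ne' (Gamma_pos_of_pos hx').ne',
      log_mul (by positivity) (by positivity), log_mul (Gamma_pos_of_pos (by positivity)).ne'
      (by positivity), log_rpow two_pos, log_sqrt pi_pos.le] at this
  have hq : 1 + 1 / (2 * x) = (x + 1 / 2) / x := by field_simp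
  rw [stirlingRemainder, stirlingRemainder, stirlingRemainder, hq, log_div hx'.ne' hx.ne',
    log_mul two_ne_zero hx.ne', log_mul two_ne_zero pi_ne_zero]
  linear_combination hlog

theorem tendsto_stirlingRemainder_natCast_add_half :
    Tendsto (fun n : ℕ => stirlingRemainder (n + 1 / 2)) atTop (𝓝 0) := by
  have h2n : Tendsto (fun n : ℕ => 2 * n) atTop atTop := tendsto_id.const_mul_atTop' two_pos
  have hlog : Tendsto (fun n : ℕ => (2 * n : ℝ) * log (1 + 1 / (2 * n))) atTop (𝓝 1) :=
    (tendsto_mul_log_one_add_div_atTop 1).comp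
      (tendsto_natCast_atTop_atTop.const_mul_atTop two_pos)
  have h := ((tendsto_stirlingRemainder_natCast.comp h2n).sub tendsto_stirlingRemainder_natCast).add
    ((hlog.const_sub 1).div_const 2)
  simp only [sub_self, zero_div, add_zero] at h
  refine h.congr' ?_
  filter_upwards [eventually_ne_atTop 0] with n hn
  rw [stirlingRemainder_add_half (by positivity)]
  simp

theorem tendsto_stirlingRemainder_half_natCast_add (c : ℕ) :
    Tendsto (fun m : ℕ => stirlingRemainder (c / 2 + m)) atTop (𝓝 0) := by
  obtain ⟨k, rfl | rfl⟩ := c.even_or_odd'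
  · refine (tendsto_stirlingRemainder_natCast.comp (tendsto_add_atTop_nat k)).congr fun m => ?_
    simp only [Function.comp_apply]
    push_cast
    ring_nf
  · refine (tendsto_stirlingRemainder_natCast_add_half.comp (tendsto_add_atTop_nat k)).congr
      fun m => ?_
    simp only [Function.comp_apply]
    push_cast
    ring_nf

theorem stirlingRemainder_half_natCast_mem_Icc {c : ℕ} (hc : c ≠ 0) :
    stirlingRemainder (c / 2) ∈ Set.Icc 0 ((c : ℝ)⁻¹ / 6) := by
  have h := stirlingRemainder_mem_Icc_of_tendsto (by positivity)
    (tendsto_stirlingRemainder_half_natCast_add c)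
  rwa [inv_div, show (2 / c : ℝ) / 12 = (c : ℝ)⁻¹ / 6 by ring] at h

theorem xiFn_eq_stirlingRemainder (x : ℝ) : xiFn x = stirlingRemainder x - log x / 2 := by
  rw [xiFn, stirlingRemainder]
  ring

theorem cake_bayes_sub_lrt_eq (lrt : ℝ) {a b : ℝ} (ha : 0 < a) (hb : 0 < b) :
    (lrt - 3 * log (a + b) - 2 * xiFn ((a + b) / 2) + 2 * xiFn (a / 2) + 2 * xiFn (b / 2)
        + log (a * b / 2)) - lrt + 2 * log (a + b) =
      2 * stirlingRemainder (a / 2) + 2 * stirlingRemainder (b / 2)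
        - 2 * stirlingRemainder ((a + b) / 2) := by
  simp only [xiFn_eq_stirlingRemainder]
  rw [log_div (by positivity) two_ne_zero, log_div ha.ne' two_ne_zero, log_div hb.ne' two_ne_zero,
    log_div (by positivity) two_ne_zero, log_mul ha.ne' hb.ne']
  ring

/-- Two-sample test with cake priors: the exact penalization
−3 ln n − 2ξ(n/2) + 2ξ(n₀/2) + 2ξ(n₁/2) + ln(n₀n₁/2) equals −2 ln n up to
O(1/n₀ + 1/n₁), i.e. |λ_Bayes − λ_LRT + 2 ln n| ≤ C (1/n₀ + 1/n₁). -/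
theorem two_sample_cake_penalty :
    ∃ C : ℝ, ∀ n₀ n₁ : ℕ, 2 ≤ n₀ → 2 ≤ n₁ → ∀ lrt : ℝ,
      |(lrt - 3 * Real.log (n₀ + n₁ : ℝ) - 2 * xiFn ((n₀ + n₁ : ℝ) / 2)
          + 2 * xiFn ((n₀ : ℝ) / 2) + 2 * xiFn ((n₁ : ℝ) / 2)
          + Real.log ((n₀ : ℝ) * n₁ / 2))
        - lrt + 2 * Real.log (n₀ + n₁ : ℝ)|
        ≤ C * (1 / (n₀ : ℝ) + 1 / (n₁ : ℝ)) := by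
  refine ⟨1 / 3, fun n₀ n₁ h₀ h₁ lrt => ?_⟩
  have hn₀ : n₀ ≠ 0 := by omega
  have hn₁ : n₁ ≠ 0 := by omega
  obtain ⟨lb₀, ub₀⟩ := stirlingRemainder_half_natCast_mem_Icc hn₀
  obtain ⟨lb₁, ub₁⟩ := stirlingRemainder_half_natCast_mem_Icc hn₁
  obtain ⟨lb, ub⟩ := stirlingRemainder_half_natCast_mem_Icc (by omega : n₀ + n₁ ≠ 0)
  push_cast at lb ub
  have hinv : ((n₀ : ℝ) + n₁)⁻¹ ≤ (n₀ : ℝ)⁻¹ := by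
    gcongr
    linarith [n₁.cast_nonneg (α := ℝ)]
  rw [cake_bayes_sub_lrt_eq lrt (by positivity) (by positivity), abs_le]
  simp only [one_div]
  constructor <;> linarith
end

section
/- In the linear model with cake priors, as h → ∞, λ_Bayes = BIC_{γ₀} − BIC_{γ₁} = λ_LRT − ν ln n, where λ_LRT = n ln σ̂²_{γ₀} − n ln σ̂²_{γ₁}, ν = |γ₁| − |γ₀|, and BIC_γ = n ln(2π σ̂²_γ) − n + |γ| ln n. -/
/-! Once `log ∘ exp` cancels, every logarithm converges by continuity of `log` away from `0`:
with `a = 1/(1+k) > 0`, the shrinkage factor `h^a/(1+h^a)` tends to `1` and `h^(-a)` to `0`,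
so the prior terms `(1+kⱼ)/2 · log(n + h^(-aⱼ))` leave exactly the BIC penalty `(k₁ - k₀) log n`. -/

open Real Filter Topology

lemma tendsto_div_one_add_atTop_nhds_one :
    Tendsto (fun x : ℝ => x / (1 + x)) atTop (𝓝 1) := by
  have hinv : Tendsto (fun x : ℝ => (1 + x)⁻¹) atTop (𝓝 0) :=
    tendsto_inv_atTop_zero.comp (tendsto_atTop_add_const_left _ 1 tendsto_id)
  have hsub : Tendsto (fun x : ℝ => 1 - (1 + x)⁻¹) atTop (𝓝 1) := by
    simpa using tendsto_const_nhds.sub hinv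
  refine hsub.congr' ?_
  filter_upwards [eventually_gt_atTop 0] with x hx
  field_simp
  ring

lemma tendsto_log_one_sub_rpow_div_one_add_rpow_mul {a : ℝ} (ha : 0 < a) {R : ℝ} (hR : R ≠ 1) :
    Tendsto (fun h : ℝ => log (1 - h ^ a / (1 + h ^ a) * R)) atTop (𝓝 (log (1 - R))) := by
  have hshrink := tendsto_div_one_add_atTop_nhds_one.comp (tendsto_rpow_atTop ha)
  have hlin : Tendsto (fun h : ℝ => 1 - h ^ a / (1 + h ^ a) * R) atTop (𝓝 (1 - 1 * R)) :=
    tendsto_const_nhds.sub (hshrink.mul tendsto_const_nhds)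
  rw [one_mul] at hlin
  exact hlin.log (sub_ne_zero.mpr hR.symm)

lemma tendsto_log_add_rpow_neg {a : ℝ} (ha : 0 < a) {c : ℝ} (hc : c ≠ 0) :
    Tendsto (fun h : ℝ => log (c + h ^ (-a))) atTop (𝓝 (log c)) := by
  have hlin : Tendsto (fun h : ℝ => c + h ^ (-a)) atTop (𝓝 (c + 0)) :=
    tendsto_const_nhds.add (tendsto_rpow_neg_atTop ha)
  rw [add_zero] at hlin
  exact hlin.log hc

/-- Linear model with cake priors: as h → ∞,
λ_Bayes = −2 ln BF₀₁(h) → n ln σ̂²_{γ₀} − n ln σ̂²_{γ₁} − (|γ₁| − |γ₀|) ln n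
= BIC_{γ₀} − BIC_{γ₁} = λ_LRT − ν ln n. -/
theorem linear_model_cake_limit (n : ℕ) (hn : 1 ≤ n) (k₀ k₁ : ℕ)
    (R0 R1 : ℝ) (hR0 : 0 ≤ R0 ∧ R0 < 1) (hR1 : 0 ≤ R1 ∧ R1 < 1) :
    Tendsto (fun h : ℝ =>
      -2 * Real.log (Real.exp (
        -((n : ℝ) / 2) * Real.log (1 - h ^ ((1 : ℝ) / (1 + k₀)) /
            (1 + h ^ ((1 : ℝ) / (1 + k₀))) * R0)
        + ((n : ℝ) / 2) * Real.log (1 - h ^ ((1 : ℝ) / (1 + k₁)) /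
            (1 + h ^ ((1 : ℝ) / (1 + k₁))) * R1)
        - ((1 + (k₀ : ℝ)) / 2) * Real.log ((n : ℝ) + h ^ (-(1 : ℝ) / (1 + k₀)))
        + ((1 + (k₁ : ℝ)) / 2) * Real.log ((n : ℝ) + h ^ (-(1 : ℝ) / (1 + k₁))))))
      atTop
      (nhds ((n : ℝ) * Real.log (1 - R0) - (n : ℝ) * Real.log (1 - R1)
        - ((k₁ : ℝ) - (k₀ : ℝ)) * Real.log n)) := by
  have ha (k : ℕ) : 0 < (1 : ℝ) / (1 + k) := by positivity
  have hn' : (n : ℝ) ≠ 0 := Nat.cast_ne_zero.mpr (by omega)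
  have hR₀ := tendsto_log_one_sub_rpow_div_one_add_rpow_mul (ha k₀) hR0.2.ne
  have hR₁ := tendsto_log_one_sub_rpow_div_one_add_rpow_mul (ha k₁) hR1.2.ne
  have hk₀ := tendsto_log_add_rpow_neg (ha k₀) hn'
  have hk₁ := tendsto_log_add_rpow_neg (ha k₁) hn'
  simp only [log_exp, neg_div _ (1 : ℝ)]
  convert ((((hR₀.const_mul (-((n : ℝ) / 2))).add (hR₁.const_mul ((n : ℝ) / 2))).sub
    (hk₀.const_mul ((1 + (k₀ : ℝ)) / 2))).add (hk₁.const_mul ((1 + (k₁ : ℝ)) / 2))).const_mul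
    (-2) using 2
  ring
end
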